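/- For an n₂×n₁ binary matching matrix M (each column has exactly one 1 and each row at most one 1, n₁ ≤ n₂), M satisfies MᵀM = I_{n₁}; hence every minimal eigenvalue matching matrix is a feasible point of the orthogonally-constrained optimization, and the optimal value of the orthogonally-constrained problem is at most the minimal matching cost. -/

import Mathlib

/-!
Each column of a matching matrix has a single 1, and two distinct columns never share a row,
since that row would have sum at least 2; so the columns are orthonormal and `M` is feasible.
For diagonal `Λ₁`, `Λ₂` the entries of `M Λ₁ - Λ₂ M` are `M i j (Λ₁ j j - Λ₂ i i)`, and since
`M i j ^ 2 = M i j` the squared Frobenius norm at `M` is exactly the matching cost.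
-/

open Matrix

noncomputable def frob {m n : Type*} [Fintype m] [Fintype n] (A : Matrix m n ℝ) : ℝ :=
  Real.sqrt ((Aᵀ * A).trace)

lemma trace_transpose_mul_self_eq_sum_sq {m n R : Type*} [Fintype m] [Fintype n] [CommSemiring R]
    (A : Matrix m n R) : (Aᵀ * A).trace = ∑ i, ∑ j, A i j ^ 2 := by
  simp only [trace, diag, mul_apply, transpose_apply, sq]
  exact Finset.sum_comm

lemma frob_sq_eq_sum_sq {m n : Type*} [Fintype m] [Fintype n] (A : Matrix m n ℝ) :
    frob A ^ 2 = ∑ i, ∑ j, A i j ^ 2 := by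
  rw [frob, trace_transpose_mul_self_eq_sum_sq, Real.sq_sqrt (by positivity)]

lemma mul_isDiag_sub_isDiag_mul_apply {m n R : Type*} [Fintype m] [Fintype n] [DecidableEq m]
    [DecidableEq n] [CommRing R] (M : Matrix m n R) {Λ₁ : Matrix n n R} {Λ₂ : Matrix m m R}
    (hΛ₁ : Λ₁.IsDiag) (hΛ₂ : Λ₂.IsDiag) (i : m) (j : n) :
    (M * Λ₁ - Λ₂ * M) i j = M i j * (Λ₁ j j - Λ₂ i i) := by
  have h₁ : M * Λ₁ = M * diagonal Λ₁.diag := by rw [hΛ₁.diagonal_diag]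
  have h₂ : Λ₂ * M = diagonal Λ₂.diag * M := by rw [hΛ₂.diagonal_diag]
  rw [h₁, h₂, Matrix.sub_apply, mul_diagonal, diagonal_mul, diag_apply, diag_apply]
  ring

section Binary

variable {m n R : Type*} {M : Matrix m n R}

lemma mul_self_apply_eq_of_binary [MulZeroOneClass R] (hbin : ∀ i j, M i j = 0 ∨ M i j = 1)
    (i : m) (j : n) : M i j * M i j = M i j := by
  rcases hbin i j with h | h <;> simp [h]

lemma apply_mul_apply_eq_zero_of_row_sum_le_one [Fintype n] [Semiring R] [PartialOrder R]
    [IsStrictOrderedRing R] (hbin : ∀ i j, M i j = 0 ∨ M i j = 1) (hrow : ∀ i, ∑ j, M i j ≤ 1)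
    (i : m) {j k : n} (hjk : j ≠ k) : M i j * M i k = 0 := by
  classical
  have hnonneg : ∀ l, 0 ≤ M i l := fun l => by rcases hbin i l with h | h <;> simp [h]
  rcases hbin i j with hj | hj
  · simp [hj]
  rcases hbin i k with hk | hk
  · simp [hk]
  have htwo : M i j + M i k ≤ ∑ l, M i l := by
    rw [← Finset.sum_pair hjk]
    exact Finset.sum_le_sum_of_subset_of_nonneg (Finset.subset_univ _) fun l _ _ => hnonneg l
  rw [hj, hk] at htwo
  exact absurd (htwo.trans (hrow i)) (lt_add_of_pos_left 1 zero_lt_one).not_ge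

lemma transpose_mul_self_eq_one_of_matching [Fintype m] [Fintype n] [DecidableEq n] [Semiring R]
    [PartialOrder R] [IsStrictOrderedRing R] (hbin : ∀ i j, M i j = 0 ∨ M i j = 1)
    (hcol : ∀ j, ∑ i, M i j = 1) (hrow : ∀ i, ∑ j, M i j ≤ 1) : Mᵀ * M = 1 := by
  ext j k
  rw [mul_apply, one_apply]
  split_ifs with hjk
  · subst hjk
    simp_rw [transpose_apply, mul_self_apply_eq_of_binary hbin, hcol]
  · exact Finset.sum_eq_zero fun i _ => apply_mul_apply_eq_zero_of_row_sum_le_one hbin hrow i hjk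

end Binary

lemma frob_sq_mul_isDiag_sub_isDiag_mul_of_binary {m n : Type*} [Fintype m] [Fintype n]
    [DecidableEq m] [DecidableEq n] {M : Matrix m n ℝ} (hbin : ∀ i j, M i j = 0 ∨ M i j = 1)
    {Λ₁ : Matrix n n ℝ} {Λ₂ : Matrix m m ℝ} (hΛ₁ : Λ₁.IsDiag) (hΛ₂ : Λ₂.IsDiag) :
    frob (M * Λ₁ - Λ₂ * M) ^ 2 = ∑ i, ∑ j, M i j * (Λ₁ j j - Λ₂ i i) ^ 2 := by
  simp_rw [frob_sq_eq_sum_sq, mul_isDiag_sub_isDiag_mul_apply M hΛ₁ hΛ₂, mul_pow, sq (M _ _),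
    mul_self_apply_eq_of_binary hbin]

theorem stmt17 {n₁ n₂ : ℕ}
    (M : Matrix (Fin n₂) (Fin n₁) ℝ)
    (hbin : ∀ i j, M i j = 0 ∨ M i j = 1)
    (hcol : ∀ j, ∑ i, M i j = 1)
    (hrow : ∀ i, ∑ j, M i j ≤ 1)
    (Λ₁ : Matrix (Fin n₁) (Fin n₁) ℝ) (Λ₂ : Matrix (Fin n₂) (Fin n₂) ℝ)
    (hΛ₁ : Λ₁.IsDiag) (hΛ₂ : Λ₂.IsDiag) :
    Mᵀ * M = 1 ∧
      sInf {c : ℝ | ∃ P : Matrix (Fin n₂) (Fin n₁) ℝ, Pᵀ * P = 1 ∧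
          c = (frob (P * Λ₁ - Λ₂ * P)) ^ 2} ≤
        ∑ i, ∑ j, M i j * (Λ₁ j j - Λ₂ i i) ^ 2 := by
  have horth : Mᵀ * M = 1 := transpose_mul_self_eq_one_of_matching hbin hcol hrow
  refine ⟨horth, ?_⟩
  rw [← frob_sq_mul_isDiag_sub_isDiag_mul_of_binary hbin hΛ₁ hΛ₂]
  exact csInf_le ⟨0, by rintro _ ⟨P, -, rfl⟩; positivity⟩ ⟨M, horth, rfl⟩
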